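/- arXiv:2307.01078 — 5 statements merged into one kernel-verified Lean document; each statement's English description precedes it below -/
import Mathlib

section
/- Uniqueness of symplectic eigenvalues: Let A be a 2n×2n real positive definite matrix. If S and T are 2n×2n real symplectic matrices and D, E are n×n diagonal matrices with positive diagonal entries arranged in nondecreasing order such that SᵀAS = D ⊕ D and TᵀAT = E ⊕ E, then D = E. -/
/-!
If `S` is symplectic and `Sᵀ A S = D ⊕ D`, then `J (D ⊕ D) = S⁻¹ (J A) S`, so the characteristic
polynomial `∏ᵢ (X² + dᵢ²)` of `J (D ⊕ D)` depends only on `A`. It determines the multiset of the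
`dᵢ²`, and a nondecreasing positive `d` is determined by that multiset.
-/

open Matrix
open scoped Matrix.Norms.L2Operator Classical

/-- The canonical symplectic form matrix `((0, Iₘ), (−Iₘ, 0))` (the paper's `J₂ₘ`). -/
def J' (m : Type*) [Fintype m] [DecidableEq m] : Matrix (m ⊕ m) (m ⊕ m) ℝ :=
  Matrix.fromBlocks 0 1 (-1) 0

open Polynomial

section Symplectic

variable {m : Type*} [Fintype m] [DecidableEq m]

theorem J'_eq_neg_J : J' m = -Matrix.J m ℝ := by
  simp [J', Matrix.J, fromBlocks_neg]

theorem mul_J'_mul_transpose_eq_J' {S : Matrix (m ⊕ m) (m ⊕ m) ℝ}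
    (hS : Sᵀ * J' m * S = J' m) : S * J' m * Sᵀ = J' m := by
  have hmem : S ∈ symplecticGroup m ℝ :=
    SymplecticGroup.mem_iff'.mpr (by simpa [J'_eq_neg_J] using hS)
  simpa [J'_eq_neg_J] using SymplecticGroup.mem_iff.mp hmem

theorem charpoly_J'_mul_transpose_mul_mul {S : Matrix (m ⊕ m) (m ⊕ m) ℝ}
    (hS : Sᵀ * J' m * S = J' m) (A : Matrix (m ⊕ m) (m ⊕ m) ℝ) :
    (J' m * (Sᵀ * A * S)).charpoly = (J' m * A).charpoly := by
  rw [← Matrix.mul_assoc, ← Matrix.mul_assoc, charpoly_mul_comm, ← Matrix.mul_assoc,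
    ← Matrix.mul_assoc, mul_J'_mul_transpose_eq_J' hS]

end Symplectic

theorem Matrix.det_fromBlocks_of_commute {m R : Type*} [Fintype m] [DecidableEq m] [CommRing R]
    [IsDomain R] (A B C D : Matrix m m R) (hCD : Commute C D) (hD : D.det ≠ 0) :
    (fromBlocks A B C D).det = (A * D - B * C).det := by
  have hmul : fromBlocks A B C D * fromBlocks D 0 (-C) 1 = fromBlocks (A * D - B * C) B 0 D := by
    simp [fromBlocks_multiply, hCD.eq, sub_eq_add_neg]
  apply mul_right_cancel₀ hD
  simpa [det_fromBlocks_zero₁₂, det_fromBlocks_zero₂₁] using congrArg det hmul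

theorem charpoly_J'_mul_fromBlocks_diagonal {m : Type*} [Fintype m] [DecidableEq m] (d : m → ℝ) :
    (J' m * fromBlocks (diagonal d) 0 0 (diagonal d)).charpoly = ∏ i, (X ^ 2 + C (d i ^ 2)) := by
  have hprod : J' m * fromBlocks (diagonal d) 0 0 (diagonal d) =
      fromBlocks 0 (diagonal d) (-diagonal d) 0 := by
    rw [J', fromBlocks_multiply]
    simp
  have hC : (diagonal d).map C = diagonal fun i => C (d i) := diagonal_map (map_zero C)
  have hX : (diagonal fun _ : m => (X : ℝ[X])).det ≠ 0 := by
    rw [det_diagonal, Finset.prod_const]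
    exact pow_ne_zero _ X_ne_zero
  have hdet := det_fromBlocks_of_commute (diagonal fun _ => X) (-diagonal fun i => C (d i))
    (diagonal fun i => C (d i)) (diagonal fun _ => X) (commute_diagonal _ _) hX
  rw [hprod, charpoly, charmatrix_fromBlocks, charmatrix_zero, Matrix.map_neg _ (map_neg C), hC,
    neg_neg, scalar_apply, hdet, Matrix.neg_mul, sub_neg_eq_add, diagonal_mul_diagonal,
    diagonal_mul_diagonal, diagonal_add, det_diagonal]
  simp [pow_two]

theorem Polynomial.univ_val_map_eq_of_prod_X_sq_add_C_eq {ι R : Type*} [Fintype ι] [CommRing R]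
    [IsDomain R] {a b : ι → R} (h : ∏ i, (X ^ 2 + C (a i)) = ∏ i, (X ^ 2 + C (b i))) :
    Finset.univ.val.map a = Finset.univ.val.map b := by
  have hexpand : ∀ c : ι → R, ∏ i, (X ^ 2 + C (c i)) =
      expand R 2 ((Finset.univ.val.map fun i => -c i).map fun r => X - C r).prod := by
    intro c
    rw [Multiset.map_map, Finset.prod_map_val, map_prod]
    simp [sub_eq_add_neg]
  rw [hexpand, hexpand, (expand_injective two_pos).eq_iff] at h
  have hroots := congrArg roots h
  rw [roots_multiset_prod_X_sub_C, roots_multiset_prod_X_sub_C] at hroots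
  simpa [Multiset.map_map, Function.comp_def] using congrArg (Multiset.map Neg.neg) hroots

theorem Monotone.eq_of_univ_val_map_eq {α : Type*} [PartialOrder α] {n : ℕ} {f g : Fin n → α}
    (hf : Monotone f) (hg : Monotone g) (h : Finset.univ.val.map f = Finset.univ.val.map g) :
    f = g :=
  List.ofFn_injective <| List.Perm.eq_of_sortedLE hf.sortedLE_ofFn hg.sortedLE_ofFn <|
    Multiset.coe_eq_coe.mp (by simpa using h)

theorem symplectic_eigenvalues_unique_general (n : ℕ)
    (A S T : Matrix (Fin n ⊕ Fin n) (Fin n ⊕ Fin n) ℝ)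
    (d e : Fin n → ℝ)
    (hd : Monotone d) (he : Monotone e)
    (hdpos : ∀ i, 0 < d i) (hepos : ∀ i, 0 < e i)
    (hS : Sᵀ * J' (Fin n) * S = J' (Fin n))
    (hT : Tᵀ * J' (Fin n) * T = J' (Fin n))
    (hSA : Sᵀ * A * S = Matrix.fromBlocks (Matrix.diagonal d) 0 0 (Matrix.diagonal d))
    (hTA : Tᵀ * A * T = Matrix.fromBlocks (Matrix.diagonal e) 0 0 (Matrix.diagonal e)) :
    d = e := by
  have hchar : ∏ i, (X ^ 2 + C (d i ^ 2)) = ∏ i, (X ^ 2 + C (e i ^ 2)) := by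
    rw [← charpoly_J'_mul_fromBlocks_diagonal, ← charpoly_J'_mul_fromBlocks_diagonal, ← hSA, ← hTA,
      charpoly_J'_mul_transpose_mul_mul hS, charpoly_J'_mul_transpose_mul_mul hT]
  have hsq_mono : ∀ f : Fin n → ℝ, Monotone f → (∀ i, 0 < f i) → Monotone fun i => f i ^ 2 :=
    fun f hf hfpos i j hij => pow_le_pow_left₀ (hfpos i).le (hf hij) 2
  have hsq : (fun i => d i ^ 2) = fun i => e i ^ 2 :=
    (hsq_mono d hd hdpos).eq_of_univ_val_map_eq (hsq_mono e he hepos)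
      (univ_val_map_eq_of_prod_X_sq_add_C_eq hchar)
  funext i
  exact (pow_left_inj₀ (hdpos i).le (hepos i).le two_ne_zero).mp (congrFun hsq i)

/-- **Uniqueness of symplectic eigenvalues**: if symplectic matrices `S`, `T` diagonalize
a positive definite `A` in Williamson's theorem with nondecreasing positive diagonals
`d` and `e`, then `d = e`. -/
theorem symplectic_eigenvalues_unique (n : ℕ)
    (A S T : Matrix (Fin n ⊕ Fin n) (Fin n ⊕ Fin n) ℝ) (hA : A.PosDef)
    (d e : Fin n → ℝ)
    (hd : Monotone d) (he : Monotone e)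
    (hdpos : ∀ i, 0 < d i) (hepos : ∀ i, 0 < e i)
    (hS : Sᵀ * J' (Fin n) * S = J' (Fin n))
    (hT : Tᵀ * J' (Fin n) * T = J' (Fin n))
    (hSA : Sᵀ * A * S = Matrix.fromBlocks (Matrix.diagonal d) 0 0 (Matrix.diagonal d))
    (hTA : Tᵀ * A * T = Matrix.fromBlocks (Matrix.diagonal e) 0 0 (Matrix.diagonal e)) :
    d = e :=
  symplectic_eigenvalues_unique_general n A S T d e hd he hdpos hepos hS hT hSA hTA
end

section
/- Symplectic concatenation criterion: Let k + ℓ ≤ n, let M be a 2n×2k real matrix with MᵀJ₂ₙM = J₂ₖ, and let N be a 2n×2ℓ real matrix with NᵀJ₂ₙN = J₂ₗ. Then the symplectic concatenation M ⋄ N (a 2n×2(k+ℓ) matrix) satisfies (M ⋄ N)ᵀJ₂ₙ(M ⋄ N) = J₂₍ₖ₊ₗ₎ if and only if MᵀJ₂ₙN = 0 (the 2k×2ℓ zero matrix). -/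
/-!
Reordering the columns of `M ⋄ N` into `(M | N)` turns its Gram matrix under `J₂ₙ` into the block
matrix of the four products `XᵀJ₂ₙY` for `X, Y ∈ {M, N}`, and the same reordering turns `J₂₍ₖ₊ₗ₎`
into `diag(J₂ₖ, J₂ₗ)`. The diagonal blocks agree by hypothesis, and since `J₂ₙ` is skew-symmetric
the lower off-diagonal block is minus the transpose of the upper one `MᵀJ₂ₙN`.
-/

open Matrix
open scoped Matrix.Norms.L2Operator Classical

/-- The symplectic concatenation `M ⋄ N` of a `2n × 2k` matrix
`M = (p₁, …, p_k, q₁, …, q_k)` and a `2n × 2ℓ` matrix `N = (x₁, …, x_ℓ, y₁, …, y_ℓ)`,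
namely `(p₁, …, p_k, x₁, …, x_ℓ, q₁, …, q_k, y₁, …, y_ℓ)`. -/
def sconcat {n k l : ℕ} (M : Matrix (Fin n ⊕ Fin n) (Fin k ⊕ Fin k) ℝ)
    (N : Matrix (Fin n ⊕ Fin n) (Fin l ⊕ Fin l) ℝ) :
    Matrix (Fin n ⊕ Fin n) ((Fin k ⊕ Fin l) ⊕ (Fin k ⊕ Fin l)) ℝ :=
  Matrix.of fun r c =>
    Sum.elim
      (Sum.elim (fun a => M r (Sum.inl a)) (fun a => N r (Sum.inl a)))
      (Sum.elim (fun a => M r (Sum.inr a)) (fun a => N r (Sum.inr a))) c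

namespace Matrix

variable {m p q : Type*} [Fintype m]

theorem transpose_submatrix_mul_mul_submatrix {R : Type*} [CommSemiring R]
    (A : Matrix m p R) (J : Matrix m m R) (e : q ≃ p) :
    (A.submatrix id e)ᵀ * J * A.submatrix id e = (Aᵀ * J * A).submatrix e e := by
  rw [transpose_submatrix, submatrix_mul _ _ _ id _ Function.bijective_id,
    submatrix_mul _ _ _ id _ Function.bijective_id, submatrix_id_id]

theorem transpose_fromCols_mul_mul_fromCols {R : Type*} [CommSemiring R]
    (A : Matrix m p R) (B : Matrix m q R) (J : Matrix m m R) :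
    (fromCols A B)ᵀ * J * fromCols A B =
      fromBlocks (Aᵀ * J * A) (Aᵀ * J * B) (Bᵀ * J * A) (Bᵀ * J * B) := by
  rw [transpose_fromCols, fromRows_mul, fromRows_mul_fromCols]

theorem transpose_transpose_mul_mul_of_transpose_eq_neg {R : Type*} [CommRing R]
    {J : Matrix m m R} (hJ : Jᵀ = -J) (A : Matrix m p R) (B : Matrix m q R) :
    (Aᵀ * J * B)ᵀ = -(Bᵀ * J * A) := by
  rw [transpose_mul, transpose_mul, transpose_transpose, hJ, Matrix.neg_mul, Matrix.mul_neg,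
    Matrix.mul_assoc]

end Matrix

section J'

variable (α β : Type*) [Fintype α] [DecidableEq α] [Fintype β] [DecidableEq β]

theorem J'_transpose : (J' α)ᵀ = -J' α := by
  simp [J', fromBlocks_transpose, fromBlocks_neg]

theorem J'_sum : J' (α ⊕ β) =
    (fromBlocks (J' α) 0 0 (J' β)).submatrix
      (Equiv.sumSumSumComm α β α β) (Equiv.sumSumSumComm α β α β) := by
  ext (i | i) (j | j) <;> rcases i with i | i <;> rcases j with j | j <;>
    simp [J', one_apply]

end J'

theorem sconcat_eq_submatrix_fromCols {n k l : ℕ}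
    (M : Matrix (Fin n ⊕ Fin n) (Fin k ⊕ Fin k) ℝ) (N : Matrix (Fin n ⊕ Fin n) (Fin l ⊕ Fin l) ℝ) :
    sconcat M N =
      (fromCols M N).submatrix id (Equiv.sumSumSumComm (Fin k) (Fin l) (Fin k) (Fin l)) := by
  ext r ((c | c) | (c | c)) <;> rfl

theorem sconcat_symplectic_iff_general (n k l : ℕ)
    (M : Matrix (Fin n ⊕ Fin n) (Fin k ⊕ Fin k) ℝ)
    (N : Matrix (Fin n ⊕ Fin n) (Fin l ⊕ Fin l) ℝ)
    (hM : Mᵀ * J' (Fin n) * M = J' (Fin k))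
    (hN : Nᵀ * J' (Fin n) * N = J' (Fin l)) :
    (sconcat M N)ᵀ * J' (Fin n) * sconcat M N = J' (Fin k ⊕ Fin l) ↔
      Mᵀ * J' (Fin n) * N = 0 := by
  set e := Equiv.sumSumSumComm (Fin k) (Fin l) (Fin k) (Fin l)
  have hskew : Nᵀ * J' (Fin n) * M = -(Mᵀ * J' (Fin n) * N)ᵀ := by
    rw [transpose_transpose_mul_mul_of_transpose_eq_neg (J'_transpose _), neg_neg]
  have hinj : Function.Injective fun X : Matrix _ _ ℝ => X.submatrix e e :=
    (reindex e.symm e.symm).injective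
  rw [sconcat_eq_submatrix_fromCols, transpose_submatrix_mul_mul_submatrix,
    transpose_fromCols_mul_mul_fromCols, J'_sum, hinj.eq_iff, hM, hN, hskew, fromBlocks_inj]
  constructor
  · rintro ⟨-, h, -, -⟩
    exact h
  · intro h
    simp [h]

/-- **Symplectic concatenation criterion**: for `k + ℓ ≤ n`, `M ∈ Sp(2n, 2k)` and
`N ∈ Sp(2n, 2ℓ)`, the concatenation `M ⋄ N` lies in `Sp(2n, 2(k+ℓ))` if and only if
`MᵀJ₂ₙN = 0`. -/
theorem sconcat_symplectic_iff (n k l : ℕ) (hkl : k + l ≤ n)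
    (M : Matrix (Fin n ⊕ Fin n) (Fin k ⊕ Fin k) ℝ)
    (N : Matrix (Fin n ⊕ Fin n) (Fin l ⊕ Fin l) ℝ)
    (hM : Mᵀ * J' (Fin n) * M = J' (Fin k))
    (hN : Nᵀ * J' (Fin n) * N = J' (Fin l)) :
    (sconcat M N)ᵀ * J' (Fin n) * sconcat M N = J' (Fin k ⊕ Fin l) ↔
      Mᵀ * J' (Fin n) * N = 0 :=
  sconcat_symplectic_iff_general n k l M N hM hN
end

section
/- Norm bound on diagonalizing symplectic matrices: Let B be a 2n×2n real positive definite matrix and let S̃ be a 2n×2n real symplectic matrix such that S̃ᵀBS̃ = D̃ ⊕ D̃ for some n×n diagonal matrix D̃ with positive diagonal entries. Then ‖S̃‖² ≤ 2‖B‖·‖B⁻¹‖, where ‖·‖ is the spectral norm. -/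
open Matrix
open scoped Matrix.Norms.L2Operator Classical

/-!
Let `D = diag(d, d) = SᵀBS`. From `S J Sᵀ = J` we get `J B S = S J D`, and since `J` commutes with
`D`, `(JB)² S = -S D²`. So each column of the invertible `S` is an eigenvector of `(JB)²` with
eigenvalue `-dᵢ²`, whence `dᵢ² ≤ ‖(JB)²‖ ≤ ‖B‖²` (`J` is orthogonal) and `‖SᵀBS‖ = maxᵢ |dᵢ| ≤ ‖B‖`.
Writing `B = AᴴA`, we have `‖S‖ ≤ ‖A⁻¹‖ ‖AS‖` with `‖AS‖² = ‖SᵀBS‖` and `‖A⁻¹‖² = ‖B⁻¹‖`, so in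
fact `‖S‖² ≤ ‖B‖ ‖B⁻¹‖`.
-/

namespace Matrix

variable {𝕜 : Type*} [RCLike 𝕜] {m : Type*} [Fintype m] [DecidableEq m]

lemma norm_le_l2_opNorm_of_mulVec_eq_smul {A : Matrix m m 𝕜} {v : m → 𝕜} {μ : 𝕜} (hv : v ≠ 0)
    (h : A *ᵥ v = μ • v) : ‖μ‖ ≤ ‖A‖ := by
  have hpos : 0 < ‖(EuclideanSpace.equiv m 𝕜).symm v‖ := by simpa using hv
  have := l2_opNorm_mulVec A ((EuclideanSpace.equiv m 𝕜).symm v)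
  simp only [PiLp.continuousLinearEquiv_symm_apply, h, map_smul, norm_smul] at this
  exact le_of_mul_le_mul_right this hpos

open scoped ComplexOrder in
lemma PosDef.sq_l2_opNorm_le {B : Matrix m m 𝕜} (hB : B.PosDef) (S : Matrix m m 𝕜) :
    ‖S‖ ^ 2 ≤ ‖B⁻¹‖ * ‖Sᴴ * B * S‖ := by
  obtain ⟨A, rfl⟩ : ∃ A : Matrix m m 𝕜, B = Aᴴ * A := by
    open scoped MatrixOrder in
    exact CStarAlgebra.nonneg_iff_eq_star_mul_self.mp hB.posSemidef.nonneg
  have hA : IsUnit A.det := by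
    have := (isUnit_iff_isUnit_det _).mp hB.isUnit
    rw [det_mul] at this
    exact isUnit_of_mul_isUnit_right this
  have hS : ‖S‖ ≤ ‖A⁻¹‖ * ‖A * S‖ := by
    calc ‖S‖ = ‖A⁻¹ * (A * S)‖ := by rw [nonsing_inv_mul_cancel_left _ _ hA]
      _ ≤ _ := norm_mul_le _ _
  have hAS : ‖Sᴴ * (Aᴴ * A) * S‖ = ‖A * S‖ ^ 2 := by
    rw [sq, ← l2_opNorm_conjTranspose_mul_self, conjTranspose_mul]
    simp only [Matrix.mul_assoc]
  have hAinv : ‖(Aᴴ * A)⁻¹‖ = ‖A⁻¹‖ ^ 2 := by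
    rw [sq, mul_inv_rev, ← conjTranspose_nonsing_inv, ← CStarRing.norm_self_mul_star]
    rfl
  rw [hAS, hAinv, ← mul_pow]
  gcongr

end Matrix

namespace SymplecticGroup

variable {l : Type*} [Fintype l] [DecidableEq l]

lemma J_mem_unitary : J l ℝ ∈ unitary (Matrix (l ⊕ l) (l ⊕ l) ℝ) := by
  rw [← unitaryGroup, mem_unitaryGroup_iff', star_eq_conjTranspose,
    conjTranspose_eq_transpose_of_trivial, J_transpose, neg_mul, J_squared, neg_neg]

lemma J'_eq_neg_J : J' l = -J l ℝ := by
  simp [J', J, fromBlocks_neg]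

lemma mem_iff_transpose_mul_J'_mul {S : Matrix (l ⊕ l) (l ⊕ l) ℝ} :
    S ∈ symplecticGroup l ℝ ↔ Sᵀ * J' l * S = J' l := by
  rw [mem_iff', J'_eq_neg_J, Matrix.mul_neg, Matrix.neg_mul, neg_inj]

variable {R : Type*} [CommRing R]

lemma J_commute_fromBlocks_self (A : Matrix l l R) : Commute (J l R) (fromBlocks A 0 0 A) := by
  simp [Commute, SemiconjBy, J, fromBlocks_multiply]

lemma J_mul_mul_eq_mul_J_mul_transpose_mul_mul {S : Matrix (l ⊕ l) (l ⊕ l) R}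
    (hS : S ∈ symplecticGroup l R) (B : Matrix (l ⊕ l) (l ⊕ l) R) :
    J l R * B * S = S * J l R * (Sᵀ * B * S) := by
  conv_lhs => rw [← mem_iff.mp hS]
  simp only [Matrix.mul_assoc]

lemma sq_J_mul_mul_eq_neg_mul_sq {S B : Matrix (l ⊕ l) (l ⊕ l) R} {A : Matrix l l R}
    (hS : S ∈ symplecticGroup l R) (hSB : Sᵀ * B * S = fromBlocks A 0 0 A) :
    (J l R * B) ^ 2 * S = -(S * fromBlocks A 0 0 A ^ 2) := by
  have hJD := J_commute_fromBlocks_self A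
  set D := fromBlocks A 0 0 A
  have h : J l R * (B * S) = S * (J l R * D) := by
    simpa only [Matrix.mul_assoc, hSB] using J_mul_mul_eq_mul_J_mul_transpose_mul_mul hS B
  calc (J l R * B) ^ 2 * S = J l R * (B * (J l R * (B * S))) := by simp only [sq, Matrix.mul_assoc]
    _ = J l R * (B * S) * (J l R * D) := by
        conv_lhs => rw [h]
        simp only [Matrix.mul_assoc]
    _ = S * (J l R * J l R * (D * D)) := by rw [h, Matrix.mul_assoc, hJD.mul_mul_mul_comm]
    _ = -(S * D ^ 2) := by rw [J_squared, sq]; simp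

lemma l2_opNorm_transpose_mul_mul_le {S B : Matrix (l ⊕ l) (l ⊕ l) ℝ} {d : l → ℝ}
    (hS : S ∈ symplecticGroup l ℝ) (hSB : Sᵀ * B * S = fromBlocks (diagonal d) 0 0 (diagonal d)) :
    ‖Sᵀ * B * S‖ ≤ ‖B‖ := by
  have hsq := sq_J_mul_mul_eq_neg_mul_sq hS hSB
  rw [fromBlocks_diagonal] at hsq hSB
  rw [hSB, l2_opNorm_diagonal, pi_norm_le_iff_of_nonneg (norm_nonneg B)]
  intro i
  set v := S *ᵥ Pi.single i 1
  have hv : v ≠ 0 := by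
    have hSu : IsUnit S := (isUnit_iff_isUnit_det S).mpr (symplectic_det hS)
    exact ((mulVec_injective_iff_isUnit.mpr hSu).ne_iff' (mulVec_zero S)).mpr
      (Pi.single_ne_zero_iff.mpr one_ne_zero)
  have heigen : (J l ℝ * B) ^ 2 *ᵥ v = (-Sum.elim d d i ^ 2) • v := by
    rw [mulVec_mulVec, hsq, neg_mulVec, ← mulVec_mulVec, diagonal_pow, diagonal_mulVec_single]
    rw [Pi.pow_apply, ← smul_eq_mul, Pi.single_smul', mulVec_smul, neg_smul]
  have hsq_le : ‖Sum.elim d d i‖ ^ 2 ≤ ‖B‖ ^ 2 :=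
    calc ‖Sum.elim d d i‖ ^ 2 = ‖-Sum.elim d d i ^ 2‖ := by rw [norm_neg, norm_pow]
      _ ≤ ‖(J l ℝ * B) ^ 2‖ := norm_le_l2_opNorm_of_mulVec_eq_smul hv heigen
      _ ≤ ‖J l ℝ * B‖ ^ 2 := norm_pow_le' _ two_pos
      _ = ‖B‖ ^ 2 := by rw [CStarRing.norm_mem_unitary_mul _ J_mem_unitary]
  exact (pow_le_pow_iff_left₀ (norm_nonneg _) (norm_nonneg _) two_ne_zero).mp hsq_le

end SymplecticGroup

theorem norm_sq_le_two_mul_condition_number_general (n : ℕ)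
    (B S : Matrix (Fin n ⊕ Fin n) (Fin n ⊕ Fin n) ℝ) (hB : B.PosDef)
    (hS : Sᵀ * J' (Fin n) * S = J' (Fin n))
    (d : Fin n → ℝ)
    (hSB : Sᵀ * B * S = Matrix.fromBlocks (Matrix.diagonal d) 0 0 (Matrix.diagonal d)) :
    ‖S‖ ^ 2 ≤ 2 * ‖B‖ * ‖B⁻¹‖ := by
  have hSymp : S ∈ symplecticGroup (Fin n) ℝ := SymplecticGroup.mem_iff_transpose_mul_J'_mul.mpr hS
  have hSBS : ‖Sᵀ * B * S‖ ≤ ‖B‖ := SymplecticGroup.l2_opNorm_transpose_mul_mul_le hSymp hSB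
  calc ‖S‖ ^ 2 ≤ ‖B⁻¹‖ * ‖Sᴴ * B * S‖ := hB.sq_l2_opNorm_le S
    _ ≤ ‖B⁻¹‖ * ‖B‖ := by rw [conjTranspose_eq_transpose_of_trivial]; gcongr
    _ ≤ 2 * ‖B‖ * ‖B⁻¹‖ := by nlinarith [mul_nonneg (norm_nonneg B) (norm_nonneg B⁻¹)]

/-- **Norm bound on diagonalizing symplectic matrices**: if `B` is positive definite and the
symplectic matrix `S̃` satisfies `S̃ᵀBS̃ = D̃ ⊕ D̃` with `D̃` diagonal with positive entries, then
`‖S̃‖² ≤ 2‖B‖·‖B⁻¹‖` in the spectral norm. -/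
theorem norm_sq_le_two_mul_condition_number (n : ℕ)
    (B S : Matrix (Fin n ⊕ Fin n) (Fin n ⊕ Fin n) ℝ) (hB : B.PosDef)
    (hS : Sᵀ * J' (Fin n) * S = J' (Fin n))
    (d : Fin n → ℝ) (hdpos : ∀ i, 0 < d i)
    (hSB : Sᵀ * B * S = Matrix.fromBlocks (Matrix.diagonal d) 0 0 (Matrix.diagonal d)) :
    ‖S‖ ^ 2 ≤ 2 * ‖B‖ * ‖B⁻¹‖ :=
  norm_sq_le_two_mul_condition_number_general n B S hB hS d hSB
end

section
/- First-order antisymmetry of off-diagonal symplectic sub-blocks (equation (7) of Proposition 1): Let A be a 2n×2n real positive definite matrix with distinct symplectic eigenvalues μ₁ < ⋯ < μ_r and index sets α_i = {j : d_j(A) = μ_i}, β_i = {j + n : j ∈ α_i}. Let S ∈ Sp(2n; A) be fixed. Then there exist constants c > 0 and δ > 0 such that for every 2n×2n real symmetric matrix H with ‖H‖ < δ and A + H positive definite, every S̃ ∈ Sp(2n; A+H), and every i = 1, …, r, one has ‖(S⁻¹S̃)_{α_i β_i} + (S⁻¹S̃)_{β_i α_i}‖ ≤ c‖H‖. -/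
/-! Write `T = S⁻¹ S̃`, `D = diag(d, d)` and `E = diag(e, e)`. Since `T` is symplectic and
`Tᵀ D T = E - S̃ᵀ H S̃`, it satisfies the Sylvester-type equation `D T + (J T J) E = J S⁻¹ J H S̃`,
whose `(a, b + n)` and `(a + n, b)` entries add up to
`(d_a + e_b) (T_{a, b+n} + T_{a+n, b}) = (J S⁻¹ J H S̃)_{a, b+n} + (J S⁻¹ J H S̃)_{a+n, b}`.
The Williamson form of `A` gives `λ ‖x‖² ≤ xᵀ (A + H) x` for some `λ > 0` and all small `H`,
and this bounds the columns `b`, `b + n` of `S̃` by `√(e_b / λ)`. The factor `√e_b` is absorbed by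
`d_a + e_b ≥ 2 √(d_a e_b)`, so each entry of the sum is `O(‖H‖)` uniformly in `S̃`. -/

open Matrix
open scoped Matrix.Norms.L2Operator Classical

open SymplecticGroup WithLp

section Symplectic

variable {l R : Type*} [Fintype l] [DecidableEq l] [CommRing R]

lemma J'_eq_neg_J_s8 : J' l = -J l ℝ := by
  simp [J', J, fromBlocks_neg]

lemma transpose_mul_J'_mul_eq_J'_iff {S : Matrix (l ⊕ l) (l ⊕ l) ℝ} :
    Sᵀ * J' l * S = J' l ↔ S ∈ symplecticGroup l ℝ := by
  simp [mem_iff', J'_eq_neg_J_s8]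

lemma nonsing_inv_mem_symplecticGroup {S : Matrix (l ⊕ l) (l ⊕ l) R}
    (hS : S ∈ symplecticGroup l R) : S⁻¹ ∈ symplecticGroup l R := by
  simpa [coe_inv'] using (⟨S, hS⟩⁻¹ : symplecticGroup l R).2

lemma mul_eq_neg_J_mul_mul_J_mul_of_transpose_mul_mul_eq {T D F : Matrix (l ⊕ l) (l ⊕ l) R}
    (hT : T ∈ symplecticGroup l R) (h : Tᵀ * D * T = F) :
    D * T = -(J l R * T * J l R * F) := by
  have hinv : -(J l R * T * J l R) * Tᵀ = 1 := by
    simpa [Matrix.mul_assoc] using inv_left_mul_aux (transpose_mem hT)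
  calc D * T = -(J l R * T * J l R) * Tᵀ * (D * T) := by rw [hinv, Matrix.one_mul]
    _ = -(J l R * T * J l R * F) := by rw [← h]; noncomm_ring

lemma symplectic_sylvester_eq {S S' A H D E : Matrix (l ⊕ l) (l ⊕ l) R}
    (hS : S ∈ symplecticGroup l R) (hS' : S' ∈ symplecticGroup l R)
    (hSA : Sᵀ * A * S = D) (hS'A : S'ᵀ * (A + H) * S' = E) :
    D * (S⁻¹ * S') + J l R * (S⁻¹ * S') * J l R * E = J l R * S⁻¹ * J l R * H * S' := by
  have hSS : S * S⁻¹ = 1 := mul_nonsing_inv S (symplectic_det hS)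
  have hT : (S⁻¹ * S')ᵀ * D * (S⁻¹ * S') = E - S'ᵀ * H * S' := by
    calc (S⁻¹ * S')ᵀ * D * (S⁻¹ * S') = S'ᵀ * ((S * S⁻¹)ᵀ * A * (S * S⁻¹)) * S' := by
          rw [← hSA]; simp only [transpose_mul]; noncomm_ring
      _ = S'ᵀ * (A + H) * S' - S'ᵀ * H * S' := by
          rw [hSS, transpose_one, Matrix.one_mul, Matrix.mul_one]; noncomm_ring
      _ = E - S'ᵀ * H * S' := by rw [hS'A]
  have hJ : S' * J l R * S'ᵀ = J l R := mem_iff.mp hS'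
  rw [mul_eq_neg_J_mul_mul_J_mul_of_transpose_mul_mul_eq
    (mul_mem (nonsing_inv_mem_symplecticGroup hS) hS') hT]
  calc _ = J l R * S⁻¹ * (S' * J l R * S'ᵀ) * H * S' := by noncomm_ring
    _ = _ := by rw [hJ]

lemma J_mul_mul_J_apply_inl_inr (T : Matrix (l ⊕ l) (l ⊕ l) R) (a b : l) :
    (J l R * T * J l R) (.inl a) (.inr b) = T (.inr a) (.inl b) := by
  simp [J, Matrix.mul_apply, Fintype.sum_sum_type, fromBlocks, one_apply]

lemma J_mul_mul_J_apply_inr_inl (T : Matrix (l ⊕ l) (l ⊕ l) R) (a b : l) :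
    (J l R * T * J l R) (.inr a) (.inl b) = T (.inl a) (.inr b) := by
  simp [J, Matrix.mul_apply, Fintype.sum_sum_type, fromBlocks, one_apply]

lemma sylvester_apply_inl_inr_add_apply_inr_inl (T : Matrix (l ⊕ l) (l ⊕ l) R) (d e : l → R)
    (a b : l) :
    (diagonal (Sum.elim d d) * T + J l R * T * J l R * diagonal (Sum.elim e e)) (.inl a) (.inr b)
      + (diagonal (Sum.elim d d) * T + J l R * T * J l R * diagonal (Sum.elim e e)) (.inr a) (.inl b)
      = (d a + e b) * (T (.inl a) (.inr b) + T (.inr a) (.inl b)) := by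
  simp only [Matrix.add_apply, diagonal_mul, mul_diagonal, J_mul_mul_J_apply_inl_inr,
    J_mul_mul_J_apply_inr_inl, Sum.elim_inl, Sum.elim_inr]
  ring

end Symplectic

lemma exists_pos_forall_le_of_pos {ι : Type*} [Finite ι] {w : ι → ℝ} (hw : ∀ i, 0 < w i) :
    ∃ m > 0, ∀ i, m ≤ w i := by
  rcases isEmpty_or_nonempty ι with hι | hι
  · exact ⟨1, one_pos, isEmptyElim⟩
  · obtain ⟨i₀, hi₀⟩ := Finite.exists_min w
    exact ⟨w i₀, hw i₀, hi₀⟩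

section EuclideanNorm

variable {ι κ ν : Type*} [Fintype ι] [Fintype κ]

lemma norm_toLp_mulVec_le (M : Matrix κ ι ℝ) (v : ι → ℝ) :
    ‖toLp 2 (M *ᵥ v)‖ ≤ ‖M‖ * ‖toLp 2 v‖ :=
  M.l2_opNorm_mulVec (toLp 2 v)

lemma abs_mul_apply_le (N : Matrix κ ι ℝ) (S : Matrix ι ν ℝ) (a : κ) (j : ν) :
    |(N * S) a j| ≤ ‖N‖ * ‖toLp 2 (S.col j)‖ := by
  have hcol : (N * S) a j = (N *ᵥ S.col j) a := rfl
  rw [hcol]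
  exact (PiLp.norm_apply_le (toLp 2 (N *ᵥ S.col j)) a).trans (norm_toLp_mulVec_le N _)

lemma l2_opNorm_single_le [DecidableEq ι] [DecidableEq κ] (a : κ) (b : ι) (c : ℝ) :
    ‖(single a b c : Matrix κ ι ℝ)‖ ≤ |c| := by
  rw [l2_opNorm_def]
  refine ContinuousLinearMap.opNorm_le_bound _ (abs_nonneg c) fun x => ?_
  change ‖toLp 2 (single a b c *ᵥ ofLp x)‖ ≤ _
  rw [single_mulVec, ← Pi.single, PiLp.toLp_single, PiLp.norm_single, norm_mul, Real.norm_eq_abs]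
  exact mul_le_mul_of_nonneg_left (PiLp.norm_apply_le x b) (abs_nonneg c)

lemma l2_opNorm_le_sum_abs (M : Matrix κ ι ℝ) : ‖M‖ ≤ ∑ a, ∑ b, |M a b| := by
  calc ‖M‖ = ‖∑ a, ∑ b, single a b (M a b)‖ := by rw [← matrix_eq_sum_single]
    _ ≤ ∑ a, ‖∑ b, single a b (M a b)‖ := norm_sum_le _ _
    _ ≤ ∑ a, ∑ b, ‖single a b (M a b)‖ := by gcongr; exact norm_sum_le _ _
    _ ≤ ∑ a, ∑ b, |M a b| := by gcongr; exact l2_opNorm_single_le _ _ _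

lemma l2_opNorm_le_card_mul_card_mul {M : Matrix κ ι ℝ} {C : ℝ} (h : ∀ a b, |M a b| ≤ C) :
    ‖M‖ ≤ Fintype.card κ * Fintype.card ι * C := by
  calc ‖M‖ ≤ ∑ a, ∑ b, |M a b| := l2_opNorm_le_sum_abs M
    _ ≤ ∑ _a : κ, ∑ _b : ι, C := by gcongr with a _ b; exact h a b
    _ = Fintype.card κ * Fintype.card ι * C := by
        simp only [Finset.sum_const, Finset.card_univ, nsmul_eq_mul]; ring

lemma abs_dotProduct_mulVec_le (M : Matrix ι ι ℝ) (x : ι → ℝ) :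
    |x ⬝ᵥ M *ᵥ x| ≤ ‖M‖ * ‖toLp 2 x‖ ^ 2 := by
  have hinner : x ⬝ᵥ M *ᵥ x = inner ℝ (toLp 2 (M *ᵥ x)) (toLp 2 x) := by
    simp [EuclideanSpace.inner_toLp_toLp]
  rw [hinner]
  calc _ ≤ ‖toLp 2 (M *ᵥ x)‖ * ‖toLp 2 x‖ := abs_real_inner_le_norm _ _
    _ ≤ ‖M‖ * ‖toLp 2 x‖ * ‖toLp 2 x‖ := by gcongr; exact norm_toLp_mulVec_le M x
    _ = ‖M‖ * ‖toLp 2 x‖ ^ 2 := by ring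

lemma dotProduct_transpose_mul_mul_mulVec (S M : Matrix ι ι ℝ) (x : ι → ℝ) :
    x ⬝ᵥ (Sᵀ * M * S) *ᵥ x = (S *ᵥ x) ⬝ᵥ M *ᵥ (S *ᵥ x) := by
  rw [eq_comm, mulVec_mulVec, ← vecMul_transpose, ← dotProduct_mulVec, mulVec_mulVec,
    Matrix.mul_assoc]

variable [DecidableEq ι]

lemma dotProduct_diagonal_mulVec (w x : ι → ℝ) :
    x ⬝ᵥ diagonal w *ᵥ x = ∑ i, w i * x i ^ 2 := by
  simp only [dotProduct, mulVec_diagonal]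
  exact Finset.sum_congr rfl fun i _ => by ring

lemma exists_pos_mul_sq_norm_le_of_transpose_mul_mul_eq_diagonal {S A : Matrix ι ι ℝ}
    {w : ι → ℝ} (hS : IsUnit S.det) (hw : ∀ i, 0 < w i) (h : Sᵀ * A * S = diagonal w) :
    ∃ c > 0, ∀ x : ι → ℝ, c * ‖toLp 2 x‖ ^ 2 ≤ x ⬝ᵥ A *ᵥ x := by
  obtain ⟨m, hm, hmw⟩ := exists_pos_forall_le_of_pos hw
  refine ⟨m / (‖S‖ ^ 2 + 1), by positivity, fun x => ?_⟩
  set y := S⁻¹ *ᵥ x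
  have hx : x = S *ᵥ y := by rw [mulVec_mulVec, mul_nonsing_inv S hS, one_mulVec]
  have hxy : ‖toLp 2 x‖ ≤ ‖S‖ * ‖toLp 2 y‖ := hx ▸ norm_toLp_mulVec_le S y
  calc m / (‖S‖ ^ 2 + 1) * ‖toLp 2 x‖ ^ 2
      ≤ m / (‖S‖ ^ 2 + 1) * (‖S‖ ^ 2 + 1) * ‖toLp 2 y‖ ^ 2 := by
        rw [mul_assoc]
        gcongr
        nlinarith [norm_nonneg (toLp 2 x), sq_nonneg ‖toLp 2 y‖]
    _ = ∑ i, m * y i ^ 2 := by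
        rw [div_mul_cancel₀ _ (by positivity), EuclideanSpace.real_norm_sq_eq, Finset.mul_sum]
    _ ≤ ∑ i, w i * y i ^ 2 := by gcongr with i; exact hmw i
    _ = x ⬝ᵥ A *ᵥ x := by
        rw [← dotProduct_diagonal_mulVec, ← h, dotProduct_transpose_mul_mul_mulVec, ← hx]

lemma mul_sq_norm_sub_le_dotProduct_add_mulVec {A : Matrix ι ι ℝ} {c : ℝ}
    (hA : ∀ x : ι → ℝ, c * ‖toLp 2 x‖ ^ 2 ≤ x ⬝ᵥ A *ᵥ x) (H : Matrix ι ι ℝ) (x : ι → ℝ) :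
    (c - ‖H‖) * ‖toLp 2 x‖ ^ 2 ≤ x ⬝ᵥ (A + H) *ᵥ x := by
  calc (c - ‖H‖) * ‖toLp 2 x‖ ^ 2 = c * ‖toLp 2 x‖ ^ 2 + -(‖H‖ * ‖toLp 2 x‖ ^ 2) := by ring
    _ ≤ x ⬝ᵥ A *ᵥ x + x ⬝ᵥ H *ᵥ x :=
        add_le_add (hA x) (abs_le.mp (abs_dotProduct_mulVec_le H x)).1
    _ = x ⬝ᵥ (A + H) *ᵥ x := by rw [add_mulVec, dotProduct_add]

lemma mul_sq_norm_col_le_of_transpose_mul_mul_eq_diagonal {S M : Matrix ι ι ℝ} {w : ι → ℝ}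
    {c : ℝ} (hM : ∀ x : ι → ℝ, c * ‖toLp 2 x‖ ^ 2 ≤ x ⬝ᵥ M *ᵥ x)
    (h : Sᵀ * M * S = diagonal w) (j : ι) :
    c * ‖toLp 2 (S.col j)‖ ^ 2 ≤ w j := by
  have hw : Pi.single j 1 ⬝ᵥ diagonal w *ᵥ Pi.single j 1 = w j := by simp
  rw [← mulVec_single_one, ← hw, ← h, dotProduct_transpose_mul_mul_mulVec]
  exact hM _

end EuclideanNorm

lemma le_div_sqrt_of_add_mul_le {c d e s y g : ℝ} (hc : 0 < c) (hd : 0 < d) (he : 0 < e)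
    (hg : 0 ≤ g) (hy : 0 ≤ y) (hs : c * s ^ 2 ≤ 4 * e) (h : (d + e) * y ≤ g * s) :
    y ≤ g / √(c * d) := by
  have hsq : ((d + e) * y) ^ 2 ≤ (g * s) ^ 2 := pow_le_pow_left₀ (by positivity) h 2
  have hamgm : 4 * d * e ≤ (d + e) ^ 2 := by nlinarith [sq_nonneg (d - e)]
  have hkey : 4 * e * (c * d * y ^ 2) ≤ 4 * e * g ^ 2 := by
    calc 4 * e * (c * d * y ^ 2) = c * y ^ 2 * (4 * d * e) := by ring
      _ ≤ c * y ^ 2 * (d + e) ^ 2 := by gcongr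
      _ = c * ((d + e) * y) ^ 2 := by ring
      _ ≤ c * (g * s) ^ 2 := by gcongr
      _ = g ^ 2 * (c * s ^ 2) := by ring
      _ ≤ g ^ 2 * (4 * e) := by gcongr
      _ = 4 * e * g ^ 2 := by ring
  rw [le_div_iff₀ (by positivity), ← Real.sqrt_sq hy, ← Real.sqrt_mul (sq_nonneg y),
    ← Real.sqrt_sq hg]
  exact Real.sqrt_le_sqrt (by nlinarith)

lemma abs_inv_mul_apply_inl_inr_add_apply_inr_inl_le {l : Type*} [Fintype l] [DecidableEq l]
    {S S' A H : Matrix (l ⊕ l) (l ⊕ l) ℝ} {d e : l → ℝ} {c : ℝ}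
    (hS : S ∈ symplecticGroup l ℝ) (hS' : S' ∈ symplecticGroup l ℝ)
    (hSA : Sᵀ * A * S = diagonal (Sum.elim d d))
    (hS'A : S'ᵀ * (A + H) * S' = diagonal (Sum.elim e e)) (hc : 0 < c)
    (hAH : ∀ x, c * ‖toLp 2 x‖ ^ 2 ≤ x ⬝ᵥ (A + H) *ᵥ x) {a b : l} (hd : 0 < d a) (he : 0 < e b) :
    |(S⁻¹ * S') (.inl a) (.inr b) + (S⁻¹ * S') (.inr a) (.inl b)|
      ≤ ‖J l ℝ * S⁻¹ * J l ℝ * H‖ / √(c * d a) := by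
  have hsyl := sylvester_apply_inl_inr_add_apply_inr_inl (S⁻¹ * S') d e a b
  rw [symplectic_sylvester_eq hS hS' hSA hS'A] at hsyl
  set N := J l ℝ * S⁻¹ * J l ℝ * H
  set s₁ := ‖toLp 2 (S'.col (.inr b))‖
  set s₂ := ‖toLp 2 (S'.col (.inl b))‖
  have hs₁ : c * s₁ ^ 2 ≤ e b := mul_sq_norm_col_le_of_transpose_mul_mul_eq_diagonal hAH hS'A _
  have hs₂ : c * s₂ ^ 2 ≤ e b := mul_sq_norm_col_le_of_transpose_mul_mul_eq_diagonal hAH hS'A _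
  refine le_div_sqrt_of_add_mul_le hc hd he (norm_nonneg N) (abs_nonneg _) (s := s₁ + s₂) ?_ ?_
  · nlinarith [sq_nonneg (s₁ - s₂)]
  · calc (d a + e b) * |(S⁻¹ * S') (.inl a) (.inr b) + (S⁻¹ * S') (.inr a) (.inl b)|
        = |(N * S') (.inl a) (.inr b) + (N * S') (.inr a) (.inl b)| := by
          rw [hsyl, abs_mul, abs_of_pos (add_pos hd he)]
      _ ≤ |(N * S') (.inl a) (.inr b)| + |(N * S') (.inr a) (.inl b)| := abs_add_le _ _
      _ ≤ ‖N‖ * s₁ + ‖N‖ * s₂ := add_le_add (abs_mul_apply_le _ _ _ _) (abs_mul_apply_le _ _ _ _)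
      _ = ‖N‖ * (s₁ + s₂) := by ring

theorem offdiag_subblocks_first_order_antisymm_general (n r : ℕ)
    (A : Matrix (Fin n ⊕ Fin n) (Fin n ⊕ Fin n) ℝ)
    (d : Fin n → ℝ) (μ : Fin r → ℝ)
    (hdpos : ∀ j, 0 < d j)
    (S : Matrix (Fin n ⊕ Fin n) (Fin n ⊕ Fin n) ℝ)
    (hS : Sᵀ * J' (Fin n) * S = J' (Fin n))
    (hSA : Sᵀ * A * S = Matrix.fromBlocks (Matrix.diagonal d) 0 0 (Matrix.diagonal d)) :
    ∃ c > 0, ∃ δ > 0,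
      ∀ H : Matrix (Fin n ⊕ Fin n) (Fin n ⊕ Fin n) ℝ, H.IsSymm → ‖H‖ < δ → (A + H).PosDef →
      ∀ S' : Matrix (Fin n ⊕ Fin n) (Fin n ⊕ Fin n) ℝ,
        S'ᵀ * J' (Fin n) * S' = J' (Fin n) →
        (∃ e : Fin n → ℝ, Monotone e ∧ (∀ j, 0 < e j) ∧
          S'ᵀ * (A + H) * S' = Matrix.fromBlocks (Matrix.diagonal e) 0 0 (Matrix.diagonal e)) →
        ∀ i : Fin r,
          ‖(S⁻¹ * S').submatrix
              (fun a : {a : Fin n // d a = μ i} => (Sum.inl a.val : Fin n ⊕ Fin n))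
              (fun a : {a : Fin n // d a = μ i} => (Sum.inr a.val : Fin n ⊕ Fin n)) +
            (S⁻¹ * S').submatrix
              (fun a : {a : Fin n // d a = μ i} => (Sum.inr a.val : Fin n ⊕ Fin n))
              (fun a : {a : Fin n // d a = μ i} => (Sum.inl a.val : Fin n ⊕ Fin n))‖
            ≤ c * ‖H‖ := by
  rw [transpose_mul_J'_mul_eq_J'_iff] at hS
  rw [fromBlocks_diagonal] at hSA
  obtain ⟨lam, hlam, hA⟩ := exists_pos_mul_sq_norm_le_of_transpose_mul_mul_eq_diagonal
    (symplectic_det hS) (fun j => by cases j <;> exact hdpos _) hSA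
  obtain ⟨m, hm, hdm⟩ := exists_pos_forall_le_of_pos hdpos
  set C := ‖J (Fin n) ℝ * S⁻¹ * J (Fin n) ℝ‖ / √(lam / 2 * m)
  refine ⟨n ^ 2 * C + 1, by positivity, lam / 2, by positivity, ?_⟩
  rintro H - hH - S' hS' ⟨e, -, he, hS'A⟩ i
  rw [transpose_mul_J'_mul_eq_J'_iff] at hS'
  rw [fromBlocks_diagonal] at hS'A
  have hentry (a b : Fin n) :
      |(S⁻¹ * S') (.inl a) (.inr b) + (S⁻¹ * S') (.inr a) (.inl b)| ≤ C * ‖H‖ := by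
    calc _ ≤ ‖J (Fin n) ℝ * S⁻¹ * J (Fin n) ℝ * H‖ / √((lam - ‖H‖) * d a) :=
          abs_inv_mul_apply_inl_inr_add_apply_inr_inl_le hS hS' hSA hS'A (by linarith)
            (mul_sq_norm_sub_le_dotProduct_add_mulVec hA H) (hdpos a) (he b)
      _ ≤ ‖J (Fin n) ℝ * S⁻¹ * J (Fin n) ℝ‖ * ‖H‖ / √(lam / 2 * m) := by
          gcongr
          · exact l2_opNorm_mul _ _
          · linarith
          · linarith
          · exact hdm a
      _ = C * ‖H‖ := by ring
  have hcard : (Fintype.card {a : Fin n // d a = μ i} : ℝ) ≤ n := by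
    simpa using Fintype.card_subtype_le (fun a : Fin n => d a = μ i)
  calc _ ≤ Fintype.card {a : Fin n // d a = μ i} * Fintype.card {a : Fin n // d a = μ i}
        * (C * ‖H‖) := l2_opNorm_le_card_mul_card_mul fun a b => hentry a.val b.val
    _ ≤ n * n * (C * ‖H‖) := by gcongr
    _ ≤ (n ^ 2 * C + 1) * ‖H‖ := by nlinarith [norm_nonneg H]

/-- Equation (7) of Proposition 1: `(S⁻¹S̃)_{αᵢβᵢ} = −(S⁻¹S̃)_{βᵢαᵢ} + O(‖H‖)`, where
`αᵢ = {a : d a = μ i}` lives in the first copy of `Fin n` and `βᵢ` is the same set in the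
second copy. -/
theorem offdiag_subblocks_first_order_antisymm (n r : ℕ)
    (A : Matrix (Fin n ⊕ Fin n) (Fin n ⊕ Fin n) ℝ) (hA : A.PosDef)
    (d : Fin n → ℝ) (μ : Fin r → ℝ)
    (hd : Monotone d) (hdpos : ∀ j, 0 < d j) (hμ : StrictMono μ)
    (hdμ : ∀ j, ∃ i, d j = μ i) (hμd : ∀ i, ∃ j, d j = μ i)
    (S : Matrix (Fin n ⊕ Fin n) (Fin n ⊕ Fin n) ℝ)
    (hS : Sᵀ * J' (Fin n) * S = J' (Fin n))
    (hSA : Sᵀ * A * S = Matrix.fromBlocks (Matrix.diagonal d) 0 0 (Matrix.diagonal d)) :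
    ∃ c > 0, ∃ δ > 0,
      ∀ H : Matrix (Fin n ⊕ Fin n) (Fin n ⊕ Fin n) ℝ, H.IsSymm → ‖H‖ < δ → (A + H).PosDef →
      ∀ S' : Matrix (Fin n ⊕ Fin n) (Fin n ⊕ Fin n) ℝ,
        S'ᵀ * J' (Fin n) * S' = J' (Fin n) →
        (∃ e : Fin n → ℝ, Monotone e ∧ (∀ j, 0 < e j) ∧
          S'ᵀ * (A + H) * S' = Matrix.fromBlocks (Matrix.diagonal e) 0 0 (Matrix.diagonal e)) →
        ∀ i : Fin r,
          ‖(S⁻¹ * S').submatrix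
              (fun a : {a : Fin n // d a = μ i} => (Sum.inl a.val : Fin n ⊕ Fin n))
              (fun a : {a : Fin n // d a = μ i} => (Sum.inr a.val : Fin n ⊕ Fin n)) +
            (S⁻¹ * S').submatrix
              (fun a : {a : Fin n // d a = μ i} => (Sum.inr a.val : Fin n ⊕ Fin n))
              (fun a : {a : Fin n // d a = μ i} => (Sum.inl a.val : Fin n ⊕ Fin n))‖
            ≤ c * ‖H‖ :=
  offdiag_subblocks_first_order_antisymm_general n r A d μ hdpos S hS hSA
end

section
/- First-order diagonalization identity (equation (13) in the proof of Proposition 1): Let A = D ⊕ D be a 2n×2n positive definite matrix, where D is an n×n diagonal matrix with positive nondecreasing diagonal entries. Then there exist constants c > 0 and δ > 0 such that for every 2n×2n real symmetric matrix H with ‖H‖ < δ and A + H positive definite, and every S̃ ∈ Sp(2n; A+H), one has ‖S̃ᵀ(A+H)S̃ − A‖ ≤ c‖H‖. -/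
open Matrix
open scoped Matrix.Norms.L2Operator Classical

/-!
Symplectic eigenvalues are monotone for the order of quadratic forms. Let `B ≤ B'` be positive
definite, brought to Williamson form `diag(e, e)`, `diag(f, f)` by symplectic `S`, `T`. A dimension
count gives `x ≠ 0` such that the coordinates `y = S⁻¹x` vanish at all levels below `j` and
`z = T⁻¹x` at all levels above `j`. Symplecticity gives `Sᵀ Jᵀ B⁻¹ J S = diag(e, e)⁻¹`, so
`⟨Jx, B⁻¹Jx⟩ = ∑ y²/e`, and therefore
`e_j² ⟨Jx, B⁻¹Jx⟩ ≤ ⟨x, Bx⟩ ≤ ⟨x, B'x⟩ ≤ f_j² ⟨Jx, B'⁻¹Jx⟩ ≤ f_j² ⟨Jx, B⁻¹Jx⟩`, i.e. `e_j ≤ f_j`.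

As `|xᵀHx| ≤ ‖H‖ xᵀx`, the matrix `A + H` lies between `A - ‖H‖` and `A + ‖H‖`, which are already
in Williamson form with symplectic eigenvalues `d ∓ ‖H‖`. Hence `|e_j - d_j| ≤ ‖H‖`, and the
difference of the two diagonal forms has norm at most `‖H‖`: the theorem holds with `c = 1` and
`δ = min d`.
-/

namespace Matrix

section QuadraticForm

variable {ι : Type*} [Fintype ι]

lemma dotProduct_mulVec_transpose_mul_mul {R : Type*} [CommSemiring R] (M S : Matrix ι ι R)
    (y : ι → R) :
    y ⬝ᵥ ((Sᵀ * M * S) *ᵥ y) = (S *ᵥ y) ⬝ᵥ (M *ᵥ (S *ᵥ y)) := by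
  rw [← mulVec_mulVec, ← mulVec_mulVec, dotProduct_mulVec, vecMul_transpose]

lemma abs_dotProduct_mulVec_le [DecidableEq ι] (H : Matrix ι ι ℝ) (x : ι → ℝ) :
    |x ⬝ᵥ (H *ᵥ x)| ≤ ‖H‖ * (x ⬝ᵥ x) := by
  set X := WithLp.toLp 2 x
  have hX : x ⬝ᵥ x = ‖X‖ ^ 2 := by
    rw [← real_inner_self_eq_norm_sq, EuclideanSpace.inner_toLp_toLp, star_trivial]
  have hHX : x ⬝ᵥ (H *ᵥ x) = inner ℝ X (WithLp.toLp 2 (H *ᵥ x)) := by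
    rw [EuclideanSpace.inner_toLp_toLp, star_trivial, dotProduct_comm]
  rw [hX, hHX, sq, ← mul_assoc, mul_comm ‖H‖]
  calc _ ≤ ‖X‖ * ‖WithLp.toLp 2 (H *ᵥ x)‖ := abs_real_inner_le_norm _ _
    _ ≤ ‖X‖ * (‖H‖ * ‖X‖) := by gcongr; exact l2_opNorm_mulVec H X
    _ = _ := by ring

lemma mulVec_nonsing_inv_mulVec [DecidableEq ι] {R : Type*} [CommRing R] {B : Matrix ι ι R}
    (hB : IsUnit B) (p : ι → R) : B *ᵥ (B⁻¹ *ᵥ p) = p := by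
  rw [mulVec_mulVec, mul_nonsing_inv _ ((isUnit_iff_isUnit_det _).mp hB), one_mulVec]

lemma dotProduct_inv_mulVec_antitone [DecidableEq ι] {B B' : Matrix ι ι ℝ} (hB : B.PosDef)
    (hB' : B'.PosDef) (hle : ∀ x, x ⬝ᵥ (B *ᵥ x) ≤ x ⬝ᵥ (B' *ᵥ x)) (p : ι → ℝ) :
    p ⬝ᵥ (B'⁻¹ *ᵥ p) ≤ p ⬝ᵥ (B⁻¹ *ᵥ p) := by
  set w := B⁻¹ *ᵥ p
  set y := B'⁻¹ *ᵥ p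
  have hw : B *ᵥ w = p := mulVec_nonsing_inv_mulVec hB.isUnit p
  have hy : B' *ᵥ y = p := mulVec_nonsing_inv_mulVec hB'.isUnit p
  have hwy : w ⬝ᵥ (B *ᵥ y) = y ⬝ᵥ p := by
    rw [dotProduct_mulVec, ← mulVec_transpose, ← conjTranspose_eq_transpose_of_trivial,
      hB.isHermitian.eq, hw, dotProduct_comm]
  -- expanding `0 ≤ (w - y)ᵀ B (w - y)` and using `yᵀ B y ≤ yᵀ B' y = yᵀ p`
  have h0 : 0 ≤ (w - y) ⬝ᵥ (B *ᵥ (w - y)) := by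
    simpa using hB.posSemidef.dotProduct_mulVec_nonneg (w - y)
  have h1 := hle y
  rw [hy] at h1
  rw [mulVec_sub, dotProduct_sub, sub_dotProduct, sub_dotProduct, hw, hwy] at h0
  rw [dotProduct_comm p w, dotProduct_comm p y]
  linarith

end QuadraticForm

section Diagonal

variable {ι : Type*} [Fintype ι] [DecidableEq ι] {w y : ι → ℝ} {c : ℝ}

lemma inv_diagonal_of_pos (hw : ∀ i, 0 < w i) : (diagonal w)⁻¹ = diagonal w⁻¹ :=
  inv_eq_right_inv <| by
    rw [diagonal_mul_diagonal, ← diagonal_one]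
    exact congrArg diagonal (funext fun i => mul_inv_cancel₀ (hw i).ne')

lemma sq_mul_dotProduct_diagonal_inv_le (hc : 0 ≤ c) (hw : ∀ i, 0 < w i)
    (hy : ∀ i, y i ≠ 0 → c ≤ w i) :
    c ^ 2 * (y ⬝ᵥ (diagonal w⁻¹ *ᵥ y)) ≤ y ⬝ᵥ (diagonal w *ᵥ y) := by
  simp only [dotProduct, mulVec_diagonal, Finset.mul_sum]
  refine Finset.sum_le_sum fun i _ => ?_
  rcases eq_or_ne (y i) 0 with h | h
  · simp [h]
  have hcw : c ^ 2 / w i ≤ w i := by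
    rw [div_le_iff₀ (hw i)]; nlinarith [hy i h]
  calc c ^ 2 * (y i * (w⁻¹ i * y i)) = c ^ 2 / w i * y i ^ 2 := by simp only [Pi.inv_apply]; ring
    _ ≤ w i * y i ^ 2 := by gcongr
    _ = _ := by ring

lemma dotProduct_diagonal_le_sq_mul_inv (hw : ∀ i, 0 < w i) (hy : ∀ i, y i ≠ 0 → w i ≤ c) :
    y ⬝ᵥ (diagonal w *ᵥ y) ≤ c ^ 2 * (y ⬝ᵥ (diagonal w⁻¹ *ᵥ y)) := by
  simp only [dotProduct, mulVec_diagonal, Finset.mul_sum]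
  refine Finset.sum_le_sum fun i _ => ?_
  rcases eq_or_ne (y i) 0 with h | h
  · simp [h]
  have hcw : w i ≤ c ^ 2 / w i := by
    rw [le_div_iff₀ (hw i)]; nlinarith [hy i h, hw i]
  calc y i * (w i * y i) = w i * y i ^ 2 := by ring
    _ ≤ c ^ 2 / w i * y i ^ 2 := by gcongr
    _ = _ := by simp only [Pi.inv_apply]; ring

end Diagonal

section Kernel

variable {K ι : Type*} [Field K] [Fintype ι]

lemma exists_ne_zero_mulVec_eq_zero_on (P Q : Matrix ι ι K) (s t : Finset ι)
    (hst : s.card + t.card < Fintype.card ι) :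
    ∃ x ≠ 0, (∀ i ∈ s, (P *ᵥ x) i = 0) ∧ ∀ i ∈ t, (Q *ᵥ x) i = 0 := by
  let f : (ι → K) →ₗ[K] (s → K) × (t → K) :=
    (LinearMap.funLeft K K Subtype.val ∘ₗ P.mulVecLin).prod
      (LinearMap.funLeft K K Subtype.val ∘ₗ Q.mulVecLin)
  have hker : LinearMap.ker f ≠ ⊥ := LinearMap.ker_ne_bot_of_finrank_lt <| by
    simpa [Module.finrank_prod] using hst
  obtain ⟨x, hx, hx0⟩ := (Submodule.ne_bot_iff _).mp hker
  rw [LinearMap.mem_ker, Prod.ext_iff] at hx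
  exact ⟨x, hx0, fun i hi => congrFun hx.1 ⟨i, hi⟩, fun i hi => congrFun hx.2 ⟨i, hi⟩⟩

end Kernel

section Symplectic

variable {m : Type*} [Fintype m] [DecidableEq m]

lemma J'_eq_neg_J : J' m = -J m ℝ := by
  simp [J', J, fromBlocks_neg]

lemma transpose_mul_J'_mul_eq_iff {S : Matrix (m ⊕ m) (m ⊕ m) ℝ} :
    Sᵀ * J' m * S = J' m ↔ S ∈ symplecticGroup m ℝ := by
  rw [SymplecticGroup.mem_iff', J'_eq_neg_J, Matrix.mul_neg, Matrix.neg_mul, neg_inj]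

lemma J_transpose_mul_diagonal_elim_mul_J {R : Type*} [CommRing R] (u : m → R) :
    (J m R)ᵀ * diagonal (Sum.elim u u) * J m R = diagonal (Sum.elim u u) := by
  rw [J_transpose, ← fromBlocks_diagonal]
  simp only [J, fromBlocks_neg, fromBlocks_multiply]
  simp

lemma SymplecticGroup.transpose_mul_J_transpose_mul_inv_mul_J_mul {R : Type*} [CommRing R]
    {S : Matrix (m ⊕ m) (m ⊕ m) R} (hS : S ∈ symplecticGroup m R) (B : Matrix (m ⊕ m) (m ⊕ m) R) :
    Sᵀ * ((J m R)ᵀ * B⁻¹ * J m R) * S = (J m R)ᵀ * (Sᵀ * B * S)⁻¹ * J m R := by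
  have hl : Sᵀ * (J m R)ᵀ = (J m R)ᵀ * S⁻¹ := by
    rw [SymplecticGroup.inv_eq_symplectic_inv S hS, J_transpose]
    simp only [Matrix.neg_mul, Matrix.mul_neg, neg_neg, ← Matrix.mul_assoc, J_squared,
      Matrix.one_mul]
  have hr : J m R * S = Sᵀ⁻¹ * J m R := by
    rw [SymplecticGroup.inv_eq_symplectic_inv _ (SymplecticGroup.transpose_mem hS),
      transpose_transpose]
    simp only [Matrix.neg_mul, Matrix.mul_assoc, J_squared, Matrix.mul_neg, Matrix.mul_one, neg_neg]
  rw [Matrix.mul_inv_rev, Matrix.mul_inv_rev]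
  simp only [← Matrix.mul_assoc, hl]
  simp only [Matrix.mul_assoc, hr]

end Symplectic

section SymplecticEigenvalues

variable {m : Type*} [Fintype m] [DecidableEq m]

lemma dotProduct_mulVec_eq_of_transpose_mul_mul_eq {B S D : Matrix (m ⊕ m) (m ⊕ m) ℝ}
    (hS : S ∈ symplecticGroup m ℝ) (hSB : Sᵀ * B * S = D) (x : m ⊕ m → ℝ) :
    x ⬝ᵥ (B *ᵥ x) = (S⁻¹ *ᵥ x) ⬝ᵥ (D *ᵥ (S⁻¹ *ᵥ x)) := by
  rw [← hSB, dotProduct_mulVec_transpose_mul_mul,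
    mulVec_nonsing_inv_mulVec ((isUnit_iff_isUnit_det _).mpr (SymplecticGroup.symplectic_det hS))]

lemma dotProduct_diagonal_elim_add_const_mulVec (d : m → ℝ) (c : ℝ) (x : m ⊕ m → ℝ) :
    x ⬝ᵥ (diagonal (Sum.elim (fun k => d k + c) (fun k => d k + c)) *ᵥ x)
      = x ⬝ᵥ (diagonal (Sum.elim d d) *ᵥ x) + c * (x ⬝ᵥ x) := by
  simp only [dotProduct, mulVec_diagonal, Finset.mul_sum, ← Finset.sum_add_distrib]
  refine Finset.sum_congr rfl fun i _ => ?_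
  rcases i with k | k <;> simp only [Sum.elim_inl, Sum.elim_inr] <;> ring

variable [LinearOrder m]

/-- `S ∈ Sp(2n; B)` and `e` is the list of symplectic eigenvalues `d₁(B) ≤ ⋯ ≤ dₙ(B)`. -/
structure IsWilliamsonDiagonalization (B S : Matrix (m ⊕ m) (m ⊕ m) ℝ) (e : m → ℝ) : Prop where
  mem_symplecticGroup : S ∈ symplecticGroup m ℝ
  monotone : Monotone e
  pos : ∀ k, 0 < e k
  transpose_mul_mul : Sᵀ * B * S = diagonal (Sum.elim e e)

lemma isWilliamsonDiagonalization_diagonal_one {d : m → ℝ} (hd : Monotone d)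
    (hd_pos : ∀ k, 0 < d k) : IsWilliamsonDiagonalization (diagonal (Sum.elim d d)) 1 d :=
  ⟨(symplecticGroup m ℝ).one_mem, hd, hd_pos, by simp⟩

namespace IsWilliamsonDiagonalization

variable {B S : Matrix (m ⊕ m) (m ⊕ m) ℝ} {e : m → ℝ}

lemma elim_pos (hS : IsWilliamsonDiagonalization B S e) (i : m ⊕ m) : 0 < Sum.elim e e i := by
  rcases i with k | k <;> exact hS.pos k

lemma dotProduct_mulVec_eq (hS : IsWilliamsonDiagonalization B S e) (x : m ⊕ m → ℝ) :
    x ⬝ᵥ (B *ᵥ x) = (S⁻¹ *ᵥ x) ⬝ᵥ (diagonal (Sum.elim e e) *ᵥ (S⁻¹ *ᵥ x)) :=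
  dotProduct_mulVec_eq_of_transpose_mul_mul_eq hS.mem_symplecticGroup hS.transpose_mul_mul x

lemma J_mulVec_dotProduct_inv_mulVec_eq (hS : IsWilliamsonDiagonalization B S e)
    (x : m ⊕ m → ℝ) :
    (J m ℝ *ᵥ x) ⬝ᵥ (B⁻¹ *ᵥ (J m ℝ *ᵥ x))
      = (S⁻¹ *ᵥ x) ⬝ᵥ (diagonal (Sum.elim e e)⁻¹ *ᵥ (S⁻¹ *ᵥ x)) := by
  have hinv : (Sᵀ * B * S)⁻¹ = diagonal (Sum.elim e⁻¹ e⁻¹) := by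
    rw [hS.transpose_mul_mul, inv_diagonal_of_pos hS.elim_pos, Sum.elim_inv_inv]
  rw [← dotProduct_mulVec_transpose_mul_mul,
    dotProduct_mulVec_eq_of_transpose_mul_mul_eq (B := (J m ℝ)ᵀ * B⁻¹ * J m ℝ)
      hS.mem_symplecticGroup rfl,
    SymplecticGroup.transpose_mul_J_transpose_mul_inv_mul_J_mul hS.mem_symplecticGroup, hinv,
    J_transpose_mul_diagonal_elim_mul_J, Sum.elim_inv_inv]

theorem le_of_dotProduct_mulVec_le {B' T : Matrix (m ⊕ m) (m ⊕ m) ℝ} {f : m → ℝ}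
    (hS : IsWilliamsonDiagonalization B S e) (hT : IsWilliamsonDiagonalization B' T f)
    (hB : B.PosDef) (hB' : B'.PosDef) (hle : ∀ x, x ⬝ᵥ (B *ᵥ x) ≤ x ⬝ᵥ (B' *ᵥ x)) (j : m) :
    e j ≤ f j := by
  let level : m ⊕ m → m := Sum.elim id id
  have hcard : (Finset.univ.filter (level · < j)).card + (Finset.univ.filter (j < level ·)).card
      < Fintype.card (m ⊕ m) := by
    rw [← Finset.card_union_of_disjoint (Finset.disjoint_filter.mpr fun _ _ h => h.asymm)]
    exact Finset.card_lt_univ_of_notMem (x := Sum.inl j) (by simp [level])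
  obtain ⟨x, hx0, hy, hz⟩ := exists_ne_zero_mulVec_eq_zero_on S⁻¹ T⁻¹ _ _ hcard
  have hy_supp : ∀ i, (S⁻¹ *ᵥ x) i ≠ 0 → e j ≤ Sum.elim e e i := by
    intro i hi
    have : j ≤ level i := not_lt.mp fun h => hi (hy i (by simpa using h))
    rcases i with k | k <;> exact hS.monotone this
  have hz_supp : ∀ i, (T⁻¹ *ᵥ x) i ≠ 0 → Sum.elim f f i ≤ f j := by
    intro i hi
    have : level i ≤ j := not_lt.mp fun h => hi (hz i (by simpa using h))
    rcases i with k | k <;> exact hT.monotone this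
  have hJx : J m ℝ *ᵥ x ≠ 0 := fun h => hx0 <| mulVec_injective_iff_isUnit.mpr
    ((isUnit_iff_isUnit_det _).mpr (isUnit_det_J m ℝ)) (h.trans (mulVec_zero _).symm)
  have hpos : 0 < (J m ℝ *ᵥ x) ⬝ᵥ (B⁻¹ *ᵥ (J m ℝ *ᵥ x)) := by
    simpa using hB.inv.dotProduct_mulVec_pos hJx
  have key : e j ^ 2 * ((J m ℝ *ᵥ x) ⬝ᵥ (B⁻¹ *ᵥ (J m ℝ *ᵥ x)))
      ≤ f j ^ 2 * ((J m ℝ *ᵥ x) ⬝ᵥ (B⁻¹ *ᵥ (J m ℝ *ᵥ x))) :=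
    calc _ = e j ^ 2 * ((S⁻¹ *ᵥ x) ⬝ᵥ (diagonal (Sum.elim e e)⁻¹ *ᵥ (S⁻¹ *ᵥ x))) := by
          rw [hS.J_mulVec_dotProduct_inv_mulVec_eq]
      _ ≤ (S⁻¹ *ᵥ x) ⬝ᵥ (diagonal (Sum.elim e e) *ᵥ (S⁻¹ *ᵥ x)) :=
          sq_mul_dotProduct_diagonal_inv_le (hS.pos j).le hS.elim_pos hy_supp
      _ = x ⬝ᵥ (B *ᵥ x) := (hS.dotProduct_mulVec_eq x).symm
      _ ≤ x ⬝ᵥ (B' *ᵥ x) := hle x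
      _ = (T⁻¹ *ᵥ x) ⬝ᵥ (diagonal (Sum.elim f f) *ᵥ (T⁻¹ *ᵥ x)) := hT.dotProduct_mulVec_eq x
      _ ≤ f j ^ 2 * ((T⁻¹ *ᵥ x) ⬝ᵥ (diagonal (Sum.elim f f)⁻¹ *ᵥ (T⁻¹ *ᵥ x))) :=
          dotProduct_diagonal_le_sq_mul_inv hT.elim_pos hz_supp
      _ = f j ^ 2 * ((J m ℝ *ᵥ x) ⬝ᵥ (B'⁻¹ *ᵥ (J m ℝ *ᵥ x))) := by
          rw [hT.J_mulVec_dotProduct_inv_mulVec_eq]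
      _ ≤ _ := by gcongr; exact dotProduct_inv_mulVec_antitone hB hB' hle _
  exact (pow_le_pow_iff_left₀ (hS.pos j).le (hT.pos j).le two_ne_zero).mp
    (le_of_mul_le_mul_right key hpos)

theorem abs_sub_le_norm {d : m → ℝ} {H : Matrix (m ⊕ m) (m ⊕ m) ℝ}
    (hS : IsWilliamsonDiagonalization (diagonal (Sum.elim d d) + H) S e)
    (hpd : (diagonal (Sum.elim d d) + H).PosDef) (hd : Monotone d) (hHd : ∀ k, ‖H‖ < d k)
    (k : m) : |e k - d k| ≤ ‖H‖ := by
  have hH : ∀ x, |x ⬝ᵥ ((diagonal (Sum.elim d d) + H) *ᵥ x) - x ⬝ᵥ (diagonal (Sum.elim d d) *ᵥ x)|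
      ≤ ‖H‖ * (x ⬝ᵥ x) := fun x => by
    simpa [add_mulVec] using abs_dotProduct_mulVec_le H x
  have hshift : ∀ c, (∀ k, 0 < d k + c) →
      (diagonal (Sum.elim (fun k => d k + c) (fun k => d k + c))).PosDef ∧
        IsWilliamsonDiagonalization (diagonal (Sum.elim (fun k => d k + c) (fun k => d k + c))) 1
          (fun k => d k + c) := fun c hc =>
    ⟨posDef_diagonal_iff.mpr (by rintro (k | k) <;> exact hc k),
      isWilliamsonDiagonalization_diagonal_one (hd.add_const c) hc⟩
  obtain ⟨hpd_up, hW_up⟩ := hshift ‖H‖ fun k => by linarith [hHd k, norm_nonneg H]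
  obtain ⟨hpd_lo, hW_lo⟩ := hshift (-‖H‖) fun k => by linarith [hHd k]
  have hupper : e k ≤ d k + ‖H‖ := hS.le_of_dotProduct_mulVec_le hW_up hpd hpd_up (fun x => by
    linarith [(abs_le.mp (hH x)).2, dotProduct_diagonal_elim_add_const_mulVec d ‖H‖ x]) k
  have hlower : d k + -‖H‖ ≤ e k := hW_lo.le_of_dotProduct_mulVec_le hS hpd_lo hpd (fun x => by
    linarith [(abs_le.mp (hH x)).1, dotProduct_diagonal_elim_add_const_mulVec d (-‖H‖) x]) k
  rw [abs_sub_le_iff]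
  constructor <;> linarith

end IsWilliamsonDiagonalization

end SymplecticEigenvalues

end Matrix

theorem first_order_diagonalization_general (n : ℕ) (d : Fin n → ℝ)
    (hd : Monotone d) (hdpos : ∀ j, 0 < d j)
    (A : Matrix (Fin n ⊕ Fin n) (Fin n ⊕ Fin n) ℝ)
    (hA : A = Matrix.fromBlocks (Matrix.diagonal d) 0 0 (Matrix.diagonal d)) :
    ∃ c > 0, ∃ δ > 0,
      ∀ H : Matrix (Fin n ⊕ Fin n) (Fin n ⊕ Fin n) ℝ, H.IsSymm → ‖H‖ < δ → (A + H).PosDef →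
      ∀ S' : Matrix (Fin n ⊕ Fin n) (Fin n ⊕ Fin n) ℝ,
        S'ᵀ * J' (Fin n) * S' = J' (Fin n) →
        (∃ e : Fin n → ℝ, Monotone e ∧ (∀ j, 0 < e j) ∧
          S'ᵀ * (A + H) * S' = Matrix.fromBlocks (Matrix.diagonal e) 0 0 (Matrix.diagonal e)) →
        ‖S'ᵀ * (A + H) * S' - A‖ ≤ c * ‖H‖ := by
  obtain ⟨δ, hδ, hδd⟩ : ∃ δ > 0, ∀ k, δ ≤ d k := by
    cases n with
    | zero => exact ⟨1, one_pos, fun k => k.elim0⟩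
    | succ n => exact ⟨d 0, hdpos 0, fun k => hd (Fin.zero_le k)⟩
  refine ⟨1, one_pos, δ, hδ, ?_⟩
  rintro H - hHδ hpd S hS ⟨e, he, he_pos, hSe⟩
  simp only [hA, fromBlocks_diagonal] at hpd hSe ⊢
  have hW : IsWilliamsonDiagonalization _ S e :=
    ⟨transpose_mul_J'_mul_eq_iff.mp hS, he, he_pos, hSe⟩
  rw [hSe, diagonal_sub, one_mul, l2_opNorm_diagonal, pi_norm_le_iff_of_nonneg (norm_nonneg H)]
  rintro (k | k) <;> exact hW.abs_sub_le_norm hpd hd (fun k => hHδ.trans_le (hδd k)) k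

/-- Equation (13) in the proof of Proposition 1: for `A = D ⊕ D` positive definite with `D`
diagonal with positive nondecreasing entries, every `S̃ ∈ Sp(2n; A+H)` satisfies
`S̃ᵀ(A+H)S̃ = A + O(‖H‖)`. -/
theorem first_order_diagonalization (n : ℕ) (d : Fin n → ℝ)
    (hd : Monotone d) (hdpos : ∀ j, 0 < d j)
    (A : Matrix (Fin n ⊕ Fin n) (Fin n ⊕ Fin n) ℝ)
    (hA : A = Matrix.fromBlocks (Matrix.diagonal d) 0 0 (Matrix.diagonal d))
    (hApd : A.PosDef) :
    ∃ c > 0, ∃ δ > 0,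
      ∀ H : Matrix (Fin n ⊕ Fin n) (Fin n ⊕ Fin n) ℝ, H.IsSymm → ‖H‖ < δ → (A + H).PosDef →
      ∀ S' : Matrix (Fin n ⊕ Fin n) (Fin n ⊕ Fin n) ℝ,
        S'ᵀ * J' (Fin n) * S' = J' (Fin n) →
        (∃ e : Fin n → ℝ, Monotone e ∧ (∀ j, 0 < e j) ∧
          S'ᵀ * (A + H) * S' = Matrix.fromBlocks (Matrix.diagonal e) 0 0 (Matrix.diagonal e)) →
        ‖S'ᵀ * (A + H) * S' - A‖ ≤ c * ‖H‖ :=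
  first_order_diagonalization_general n d hd hdpos A hA
end
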